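/- Let A be an interpolatory mask (A_{2j} = D δ_j). Define the prediction-correction filters B (with symbol zI, i.e. B_1 = I and B_k = 0 otherwise), Ã = D^{−1} δ, and B̃ with (B̃^T)_k = (−1)^{1−k} A_{1−k} D^{−1}. Then these four masks form a biorthogonal system: D_{Ã^T} S_A = D_{B̃^T} S_B = id and D_{Ã^T} S_B = D_{B̃^T} S_A = 0. -/

import Mathlib

open scoped BigOperators
open Matrix

/-- Subdivision operator `(S_M c)_j = ∑_k M_{j-2k} c_k`. -/
noncomputable def subd {m : ℕ} (M : ℤ → Matrix (Fin 2 × Fin m) (Fin 2 × Fin m) ℝ)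
    (c : ℤ → Fin 2 × Fin m → ℝ) : ℤ → Fin 2 × Fin m → ℝ :=
  fun j => ∑ᶠ k : ℤ, (M (j - 2 * k)).mulVec (c k)

/-- Decomposition operator `(D_M c)_j = ∑_i M_{i-2j} c_i`. -/
noncomputable def decomp {m : ℕ} (M : ℤ → Matrix (Fin 2 × Fin m) (Fin 2 × Fin m) ℝ)
    (c : ℤ → Fin 2 × Fin m → ℝ) : ℤ → Fin 2 × Fin m → ℝ :=
  fun j => ∑ᶠ i : ℤ, (M (i - 2 * j)).mulVec (c i)

/-- The matrix `D = diag(1, 1/2) ⊗ I_m`. -/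
noncomputable def Dmat (m : ℕ) : Matrix (Fin 2 × Fin m) (Fin 2 × Fin m) ℝ :=
  Matrix.of fun p q => if p = q then (if p.1 = 0 then 1 else 1 / 2) else 0

/-- The matrix `D⁻¹ = diag(1, 2) ⊗ I_m`. -/
noncomputable def Dinv (m : ℕ) : Matrix (Fin 2 × Fin m) (Fin 2 × Fin m) ℝ :=
  Matrix.of fun p q => if p = q then (if p.1 = 0 then 1 else 2) else 0

/-- The mask `B` with symbol `zI`: `B_1 = I`, `B_k = 0` otherwise. -/
noncomputable def Bmask (m : ℕ) : ℤ → Matrix (Fin 2 × Fin m) (Fin 2 × Fin m) ℝ :=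
  fun k => if k = 1 then 1 else 0

/-- The mask `At = D⁻¹ δ`. -/
noncomputable def Amask' (m : ℕ) : ℤ → Matrix (Fin 2 × Fin m) (Fin 2 × Fin m) ℝ :=
  fun k => if k = 0 then Dinv m else 0

/-!
Interpolation means that `S_A` reproduces `D c` on the even samples, while `S_B` writes `c`
on the odd samples and zero on the even ones, so `D_{Ãᵀ} = D⁻¹ ∘ (even samples)` inverts
the first and annihilates the second. The choice of `B̃ᵀ` makes `D_{B̃ᵀ}` the correction step:
`(D_{B̃ᵀ} x)_j = x_{2j+1} - (S_A (D⁻¹ x_{2·}))_{2j+1}`, the odd sample minus its prediction from the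
even ones. This is `c` on `S_B c` and zero on `S_A c`, whose odd samples are exactly predicted.
-/

theorem finsum_int_eq_even_add_odd {M : Type*} [AddCommMonoid M] {f : ℤ → M}
    (hf : (Function.support f).Finite) :
    ∑ᶠ i, f i = ∑ᶠ l, f (2 * l) + ∑ᶠ l, f (2 * l + 1) := by
  have hdisj : Disjoint (Set.range fun l : ℤ => 2 * l) (Set.range fun l : ℤ => 2 * l + 1) := by
    rw [Set.disjoint_left]
    rintro _ ⟨l, rfl⟩ ⟨l', h⟩
    simp only at h
    omega
  have hcover :
      (Set.range fun l : ℤ => 2 * l) ∪ (Set.range fun l : ℤ => 2 * l + 1) = Set.univ := by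
    refine Set.eq_univ_of_forall fun i => ?_
    obtain ⟨l, rfl | rfl⟩ := Int.even_or_odd' i
    · exact Or.inl ⟨l, rfl⟩
    · exact Or.inr ⟨l, rfl⟩
  have hinj : Function.Injective fun l : ℤ => 2 * l := mul_right_injective₀ two_ne_zero
  have hinj' : Function.Injective fun l : ℤ => 2 * l + 1 := fun a b h => by
    simp only at h
    omega
  rw [← finsum_mem_univ, ← hcover, finsum_mem_union' hdisj (hf.subset Set.inter_subset_right)
    (hf.subset Set.inter_subset_right), finsum_mem_range hinj,
    finsum_mem_range hinj']

theorem Dmat_eq_diagonal (m : ℕ) :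
    Dmat m = diagonal fun p : Fin 2 × Fin m => if p.1 = 0 then 1 else 1 / 2 := rfl

theorem Dinv_eq_diagonal (m : ℕ) :
    Dinv m = diagonal fun p : Fin 2 × Fin m => if p.1 = 0 then 1 else 2 := rfl

theorem Dmat_mul_Dinv (m : ℕ) : Dmat m * Dinv m = 1 := by
  rw [Dmat_eq_diagonal, Dinv_eq_diagonal, diagonal_mul_diagonal, ← diagonal_one]
  congr 1 with p
  split_ifs <;> norm_num

theorem Dinv_mul_Dmat (m : ℕ) : Dinv m * Dmat m = 1 := by
  rw [Dmat_eq_diagonal, Dinv_eq_diagonal, diagonal_mul_diagonal, ← diagonal_one]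
  congr 1 with p
  split_ifs <;> norm_num

theorem transpose_Dinv (m : ℕ) : (Dinv m)ᵀ = Dinv m := by
  rw [Dinv_eq_diagonal, diagonal_transpose]

section Masks

variable {m : ℕ}

theorem subd_zero (A : ℤ → Matrix (Fin 2 × Fin m) (Fin 2 × Fin m) ℝ) : subd A 0 = 0 := by
  funext j
  simp only [subd, Pi.zero_apply, mulVec_zero, finsum_zero]

theorem subd_apply_two_mul_add {A : ℤ → Matrix (Fin 2 × Fin m) (Fin 2 × Fin m) ℝ}
    {P : Matrix (Fin 2 × Fin m) (Fin 2 × Fin m) ℝ} (r : ℤ)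
    (hA : ∀ j, A (2 * j + r) = if j = 0 then P else 0) (c : ℤ → Fin 2 × Fin m → ℝ) (j : ℤ) :
    subd A c (2 * j + r) = P *ᵥ c j := by
  rw [subd, finsum_eq_single _ j fun k hk => ?_]
  · rw [show 2 * j + r - 2 * j = 2 * 0 + r by ring, hA, if_pos rfl]
  · rw [show 2 * j + r - 2 * k = 2 * (j - k) + r by ring, hA, if_neg (sub_ne_zero.mpr hk.symm),
      zero_mulVec]

theorem subd_apply_two_mul {A : ℤ → Matrix (Fin 2 × Fin m) (Fin 2 × Fin m) ℝ}
    {P : Matrix (Fin 2 × Fin m) (Fin 2 × Fin m) ℝ}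
    (hA : ∀ j, A (2 * j) = if j = 0 then P else 0) (c : ℤ → Fin 2 × Fin m → ℝ) (j : ℤ) :
    subd A c (2 * j) = P *ᵥ c j := by
  simpa using subd_apply_two_mul_add 0 (by simpa using hA) c j

theorem subd_Bmask_two_mul (c : ℤ → Fin 2 × Fin m → ℝ) (j : ℤ) :
    subd (Bmask m) c (2 * j) = 0 := by
  simpa using subd_apply_two_mul (P := 0) (fun j => by rw [ite_self, Bmask, if_neg (by omega)]) c j

theorem subd_Bmask_two_mul_add_one (c : ℤ → Fin 2 × Fin m → ℝ) (j : ℤ) :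
    subd (Bmask m) c (2 * j + 1) = c j := by
  simpa using subd_apply_two_mul_add (P := 1) 1 (fun j => by simp [Bmask]) c j

theorem decomp_ite_eq (r : ℤ) (P : Matrix (Fin 2 × Fin m) (Fin 2 × Fin m) ℝ)
    (x : ℤ → Fin 2 × Fin m → ℝ) (j : ℤ) :
    decomp (fun k => if k = r then P else 0) x j = P *ᵥ x (2 * j + r) := by
  rw [decomp, finsum_eq_single _ (2 * j + r) fun i hi => ?_]
  · simp
  · rw [if_neg (by omega), zero_mulVec]

theorem decomp_transpose_Amask' (x : ℤ → Fin 2 × Fin m → ℝ) (j : ℤ) :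
    decomp (fun k => (Amask' m k)ᵀ) x j = Dinv m *ᵥ x (2 * j) := by
  have h : (fun k => (Amask' m k)ᵀ) = fun k => if k = 0 then Dinv m else 0 := by
    funext k
    simp [Amask', apply_ite transpose, transpose_Dinv]
  simpa [h] using decomp_ite_eq 0 (Dinv m) x j

theorem decomp_apply_eq_even_add_odd {M : ℤ → Matrix (Fin 2 × Fin m) (Fin 2 × Fin m) ℝ}
    (hM : (Function.support M).Finite) (x : ℤ → Fin 2 × Fin m → ℝ) (j : ℤ) :
    decomp M x j = ∑ᶠ l, M (2 * l - 2 * j) *ᵥ x (2 * l) +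
      ∑ᶠ l, M (2 * l + 1 - 2 * j) *ᵥ x (2 * l + 1) := by
  refine finsum_int_eq_even_add_odd
    ((hM.preimage (sub_left_injective (b := 2 * j)).injOn).subset fun i hi h => hi ?_)
  simp only [h, zero_mulVec]

theorem decomp_correction {A BtT : ℤ → Matrix (Fin 2 × Fin m) (Fin 2 × Fin m) ℝ}
    (hA : (Function.support A).Finite)
    (hinterp : ∀ j : ℤ, A (2 * j) = if j = 0 then Dmat m else 0)
    (hBtT : ∀ k : ℤ, BtT k = ((-1 : ℝ) ^ (1 - k)) • (A (1 - k) * Dinv m))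
    (x : ℤ → Fin 2 × Fin m → ℝ) (j : ℤ) :
    decomp BtT x j = x (2 * j + 1) - subd A (fun l => Dinv m *ᵥ x (2 * l)) (2 * j + 1) := by
  have hsupp : (Function.support BtT).Finite := by
    refine (hA.image (1 - ·)).subset fun k hk => ⟨1 - k, fun h => hk ?_, sub_sub_cancel 1 k⟩
    rw [hBtT, h, zero_mul, smul_zero]
  have heven : ∀ l, BtT (2 * l - 2 * j) = -(A (2 * j + 1 - 2 * l) * Dinv m) := by
    intro l
    have hsign : Odd (1 - (2 * l - 2 * j)) := ⟨j - l, by ring⟩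
    rw [hBtT, hsign.neg_one_zpow, neg_one_smul,
      show 1 - (2 * l - 2 * j) = 2 * j + 1 - 2 * l by ring]
  have hodd : ∀ l, BtT (2 * l + 1 - 2 * j) = if l = j then 1 else 0 := by
    intro l
    have hsign : Even (1 - (2 * l + 1 - 2 * j)) := ⟨j - l, by ring⟩
    rw [hBtT, hsign.neg_one_zpow, one_smul, show 1 - (2 * l + 1 - 2 * j) = 2 * (j - l) by ring,
      hinterp]
    by_cases hl : l = j
    · simp [hl, Dmat_mul_Dinv]
    · simp [sub_eq_zero, Ne.symm hl, hl]
  rw [decomp_apply_eq_even_add_odd hsupp, subd, sub_eq_neg_add]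
  congr 1
  · simp only [heven, neg_mulVec, mulVec_mulVec, finsum_neg_distrib]
  · simp only [hodd]
    rw [finsum_eq_single _ j fun l hl => by rw [if_neg hl, zero_mulVec], if_pos rfl, one_mulVec]

end Masks

/-- The prediction-correction filters `B`, `At = D⁻¹δ`, and `Bt` with
`(Btᵀ)_k = (−1)^{1−k} A_{1−k} D⁻¹`, built from an interpolatory predictor `A`,
form a biorthogonal system. -/
theorem pred_corr_biorthogonal {m : ℕ}
    (A : ℤ → Matrix (Fin 2 × Fin m) (Fin 2 × Fin m) ℝ)
    (hA : (Function.support A).Finite)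
    (hinterp : ∀ j : ℤ, A (2 * j) = if j = 0 then Dmat m else 0)
    (BtT : ℤ → Matrix (Fin 2 × Fin m) (Fin 2 × Fin m) ℝ)
    (hBtT : ∀ k : ℤ, BtT k = ((-1 : ℝ) ^ (1 - k)) • (A (1 - k) * Dinv m)) :
    (∀ c : ℤ → Fin 2 × Fin m → ℝ, decomp (fun j => (Amask' m j)ᵀ) (subd A c) = c) ∧
    (∀ c : ℤ → Fin 2 × Fin m → ℝ, decomp BtT (subd (Bmask m) c) = c) ∧
    (∀ c : ℤ → Fin 2 × Fin m → ℝ, decomp (fun j => (Amask' m j)ᵀ) (subd (Bmask m) c) = 0) ∧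
    (∀ c : ℤ → Fin 2 × Fin m → ℝ, decomp BtT (subd A c) = 0) := by
  have hcorr := decomp_correction hA hinterp hBtT
  refine ⟨fun c => ?_, fun c => ?_, fun c => ?_, fun c => ?_⟩ <;> funext j
  · rw [decomp_transpose_Amask', subd_apply_two_mul hinterp, mulVec_mulVec, Dinv_mul_Dmat,
      one_mulVec]
  · rw [hcorr, subd_Bmask_two_mul_add_one]
    simp only [subd_Bmask_two_mul, mulVec_zero, ← Pi.zero_def, subd_zero, Pi.zero_apply, sub_zero]
  · rw [decomp_transpose_Amask', subd_Bmask_two_mul, mulVec_zero, Pi.zero_apply]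
  · simp only [hcorr, subd_apply_two_mul hinterp, mulVec_mulVec, Dinv_mul_Dmat, one_mulVec,
      sub_self, Pi.zero_apply]
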